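/- Let m be a multiset of natural numbers of cardinality n ≥ 1 with (card m) − (sum of the entries of m) = 1. Then n times the number of well-formed expressions whose underlying multiset is m equals the total number of lists whose underlying multiset is m; equivalently, the probability that a uniformly random arrangement of m is a well-formed expression is 1/n. -/

import Mathlib

/-- `C v` is the length of `v` minus the sum of its entries. -/
def C (v : List ℕ) : ℤ := (v.length : ℤ) - (v.sum : ℤ)

/-- A list of natural numbers is a well-formed expression (Polish notation
encoding of an ordered rooted tree by outdegrees) if it is of the form
`d :: (w₁ ++ ⋯ ++ w_d)` where each `wᵢ` is a well-formed expression. -/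
inductive IsWF : List ℕ → Prop
  | node (d : ℕ) (ws : List (List ℕ)) (hlen : ws.length = d)
      (h : ∀ w ∈ ws, IsWF w) : IsWF (d :: ws.flatten)

/-- The `k`-rotation of `s = u ++ v` with `v` of length `k` is `v ++ u`. -/
def krot (k : ℕ) (s : List ℕ) : List ℕ :=
  s.drop (s.length - k) ++ s.take (s.length - k)

/-!
Read a list left to right, keeping the running value of `C`: a well-formed expression is exactly
a list whose total is `1` while every proper prefix has `C ≤ 0` (Łukasiewicz's criterion). Since a
letter raises `C` by at most one, such a list splits off well-formed expressions greedily. For a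
list `s` with `C s = 1`, the rotation `s.rotate j` satisfies the criterion exactly when `j` is the
first position where the prefix values `C (s.take j)` attain their maximum (the cycle lemma). Hence
`(k, w) ↦ krot k w` is a bijection from `Fin n × {well-formed arrangements of m}` onto the
arrangements of `m`: `k` is recovered as the unique rotation of `krot k w` that is well formed.
-/

lemma C_nil : C [] = 0 := by simp [C]

lemma C_cons (a : ℕ) (l : List ℕ) : C (a :: l) = 1 - a + C l := by
  simp only [C, List.length_cons, List.sum_cons]; push_cast; ring

lemma C_append (l l' : List ℕ) : C (l ++ l') = C l + C l' := by
  simp only [C, List.length_append, List.sum_append]; push_cast; ring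

lemma C_eq_card_sub_sum (l : List ℕ) :
    C l = (Multiset.card (l : Multiset ℕ) : ℤ) - ((l : Multiset ℕ).sum : ℤ) := by
  simp [C]

lemma C_perm {l l' : List ℕ} (h : l.Perm l') : C l = C l' := by
  rw [C_eq_card_sub_sum, C_eq_card_sub_sum, Multiset.coe_eq_coe.2 h]

lemma C_take_add (l : List ℕ) (i j : ℕ) :
    C (l.take (i + j)) = C (l.take i) + C ((l.drop i).take j) := by
  rw [List.take_add, C_append]

lemma C_drop (l : List ℕ) (i : ℕ) : C (l.drop i) = C l - C (l.take i) := by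
  have := C_append (l.take i) (l.drop i)
  rw [List.take_append_drop] at this
  linarith

lemma C_take_succ_le (l : List ℕ) (j : ℕ) : C (l.take (j + 1)) ≤ C (l.take j) + 1 := by
  rw [List.take_add_one, C_append]
  cases l[j]? with
  | none => simp [C_nil]
  | some a => simp [C]

-- Łukasiewicz's condition; it characterises concatenations of `t` well-formed expressions.
def IsForest (t : ℕ) (v : List ℕ) : Prop :=
  C v = t ∧ ∀ j < v.length, C (v.take j) < t

lemma isForest_cons_iff {a : ℕ} {v : List ℕ} : IsForest 1 (a :: v) ↔ IsForest a v := by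
  simp only [IsForest, List.length_cons, Nat.forall_lt_succ_left, List.take_zero, C_nil,
    List.take_succ_cons, C_cons, Nat.cast_one, zero_lt_one, true_and]
  constructor <;> rintro ⟨hC, hpre⟩ <;> exact ⟨by linarith, fun j hj => by linarith [hpre j hj]⟩

lemma IsForest.flatten {ws : List (List ℕ)} (h : ∀ w ∈ ws, IsForest 1 w) :
    IsForest ws.length ws.flatten := by
  induction ws with
  | nil => simp [IsForest, C_nil]
  | cons w ws ih =>
    obtain ⟨⟨hw, hwpre⟩, hws⟩ : IsForest 1 w ∧ ∀ w ∈ ws, IsForest 1 w := by simpa using h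
    obtain ⟨hC, hpre⟩ := ih hws
    push_cast at hw hwpre
    refine ⟨by simp [C_append, hw, hC, add_comm], fun j hj => ?_⟩
    simp only [List.flatten_cons, List.length_append, List.length_cons] at hj ⊢
    rw [List.take_append, C_append]
    push_cast
    rcases lt_or_ge j w.length with hjw | hjw
    · rw [Nat.sub_eq_zero_of_le hjw.le, List.take_zero, C_nil]
      linarith [hwpre j hjw]
    · rw [List.take_of_length_le hjw, hw]
      linarith [hpre (j - w.length) (by omega)]

lemma IsWF.isForest {w : List ℕ} (h : IsWF w) : IsForest 1 w := by
  induction h with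
  | node d ws hlen _ ih => exact isForest_cons_iff.2 (hlen ▸ IsForest.flatten ih)

lemma exists_isForest_one_take {v : List ℕ} (h : 1 ≤ C v) :
    ∃ j, 0 < j ∧ j ≤ v.length ∧ IsForest 1 (v.take j) := by
  classical
  have hex : ∃ j, 1 ≤ C (v.take j) := ⟨v.length, by rwa [List.take_length]⟩
  set j := Nat.find hex
  have hfirst : ∀ i < j, C (v.take i) < 1 := fun i hi => not_le.1 (Nat.find_min hex hi)
  have hj0 : 0 < j := (Nat.find_pos hex).2 (by simp [C_nil])
  have hjv : j ≤ v.length := Nat.find_min' hex (by rwa [List.take_length])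
  have hCj : C (v.take j) = 1 := by
    obtain ⟨i, hi⟩ : ∃ i, j = i + 1 := ⟨j - 1, by omega⟩
    have hstep := C_take_succ_le v i
    have hbefore := hfirst i (by omega)
    have hat : 1 ≤ C (v.take j) := Nat.find_spec hex
    rw [hi] at hat ⊢
    omega
  refine ⟨j, hj0, hjv, by simpa using hCj, fun i hi => ?_⟩
  rw [List.length_take, min_eq_left hjv] at hi
  rw [List.take_take, min_eq_left hi.le]
  exact_mod_cast hfirst i hi

lemma IsForest.drop {t j : ℕ} {v : List ℕ} (hv : IsForest (t + 1) v)
    (hj : IsForest 1 (v.take j)) : IsForest t (v.drop j) := by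
  refine ⟨by rw [C_drop, hv.1, hj.1]; push_cast; ring, fun i hi => ?_⟩
  rw [List.length_drop] at hi
  have := hv.2 (j + i) (by omega)
  rw [C_take_add, hj.1] at this
  push_cast at this
  linarith

theorem IsForest.exists_flatten {t : ℕ} {v : List ℕ} (hv : IsForest t v) :
    ∃ ws : List (List ℕ), ws.length = t ∧ ws.flatten = v ∧ ∀ w ∈ ws, IsWF w := by
  rcases t with _ | t
  · refine ⟨[], rfl, ?_, by simp⟩
    cases v with
    | nil => rfl
    | cons a v => simpa [C_nil] using hv.2 0 (by simp)
  · obtain ⟨j, hj0, hjv, hfirst⟩ := exists_isForest_one_take (v := v) (by rw [hv.1]; omega)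
    obtain ⟨a, u, hau⟩ : ∃ a u, v.take j = a :: u :=
      List.exists_cons_of_ne_nil (by rw [← List.length_pos_iff, List.length_take]; omega)
    have hu_lt : u.length < v.length := by
      have := congrArg List.length hau
      simp only [List.length_take, List.length_cons] at this
      omega
    have hdrop_lt : (v.drop j).length < v.length := by rw [List.length_drop]; omega
    obtain ⟨ws₁, hlen₁, hflat₁, hwf₁⟩ := (isForest_cons_iff.1 (hau ▸ hfirst)).exists_flatten
    obtain ⟨ws₂, hlen₂, hflat₂, hwf₂⟩ := (hv.drop hfirst).exists_flatten
    refine ⟨v.take j :: ws₂, by simp [hlen₂], by simp [hflat₂], ?_⟩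
    simp only [List.mem_cons, forall_eq_or_imp]
    exact ⟨hau ▸ hflat₁ ▸ IsWF.node a ws₁ hlen₁ hwf₁, hwf₂⟩
termination_by v.length

theorem isWF_iff_isForest_one {w : List ℕ} : IsWF w ↔ IsForest 1 w := by
  refine ⟨IsWF.isForest, fun h => ?_⟩
  obtain ⟨ws, hlen, rfl, hwf⟩ := h.exists_flatten
  obtain ⟨w, rfl⟩ := List.length_eq_one_iff.1 hlen
  simpa using hwf

lemma C_take_rotate_of_le {l : List ℕ} {j p : ℕ} (h : j + p ≤ l.length) :
    C ((l.rotate j).take p) = C (l.take (j + p)) - C (l.take j) := by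
  rw [List.rotate_eq_drop_append_take (by omega),
    List.take_append_of_le_length (by rw [List.length_drop]; omega), C_take_add]
  ring

lemma C_take_rotate_of_ge {l : List ℕ} {j p : ℕ} (hj : j ≤ l.length) (hp : p ≤ l.length)
    (h : l.length ≤ j + p) :
    C ((l.rotate j).take p) = C l - C (l.take j) + C (l.take (j + p - l.length)) := by
  rw [List.rotate_eq_drop_append_take hj, List.take_append,
    List.take_of_length_le (by rw [List.length_drop]; omega), List.take_take, C_append, C_drop,
    List.length_drop]
  congr 4
  omega

theorem isWF_rotate_iff {l : List ℕ} (hl : C l = 1) {j : ℕ} (hj : j < l.length) :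
    IsWF (l.rotate j) ↔
      (∀ i < l.length, C (l.take i) ≤ C (l.take j)) ∧ ∀ i < j, C (l.take i) < C (l.take j) := by
  rw [isWF_iff_isForest_one, IsForest, List.length_rotate, C_perm (List.rotate_perm l j), hl]
  simp only [Nat.cast_one, true_and]
  constructor
  · intro h
    have hstrict : ∀ i < j, C (l.take i) < C (l.take j) := fun i hi => by
      have := h (l.length - j + i) (by omega)
      rw [C_take_rotate_of_ge hj.le (by omega) (by omega), hl] at this
      rw [show j + (l.length - j + i) - l.length = i by omega] at this
      linarith
    refine ⟨fun i hi => ?_, hstrict⟩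
    rcases lt_or_ge i j with hij | hij
    · exact (hstrict i hij).le
    · have := h (i - j) (by omega)
      rw [C_take_rotate_of_le (by omega), show j + (i - j) = i by omega] at this
      linarith
  · rintro ⟨hmax, hstrict⟩ p hp
    rcases lt_or_ge (j + p) l.length with hjp | hjp
    · rw [C_take_rotate_of_le hjp.le]
      linarith [hmax (j + p) hjp]
    · rw [C_take_rotate_of_ge hj.le hp.le hjp, hl]
      linarith [hstrict (j + p - l.length) (by omega)]

lemma existsUnique_first_max {α : Type*} [LinearOrder α] (f : ℕ → α) {n : ℕ} (hn : 0 < n) :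
    ∃! j, j < n ∧ (∀ i < n, f i ≤ f j) ∧ ∀ i < j, f i < f j := by
  classical
  have hex : ∃ j, j < n ∧ ∀ i < n, f i ≤ f j := by
    obtain ⟨j, hj, hmax⟩ := Finset.exists_max_image (Finset.range n) f ⟨0, by simpa⟩
    exact ⟨j, Finset.mem_range.1 hj, fun i hi => hmax i (Finset.mem_range.2 hi)⟩
  obtain ⟨hjn, hmax⟩ := Nat.find_spec hex
  refine ⟨Nat.find hex, ⟨hjn, hmax, fun i hi => ?_⟩, fun j ⟨hj, hjmax, hjstrict⟩ => ?_⟩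
  · obtain ⟨k, hk, hik⟩ := not_forall₂.1 ((not_and.1 (Nat.find_min hex hi)) (by omega))
    exact (not_le.1 hik).trans_le (hmax k hk)
  · refine le_antisymm ?_ (Nat.find_min' hex ⟨hj, hjmax⟩)
    by_contra! hlt
    exact (hjstrict _ hlt).not_ge (hmax j hj)

theorem existsUnique_isWF_rotate {l : List ℕ} (hl : C l = 1) :
    ∃! j, j < l.length ∧ IsWF (l.rotate j) := by
  have hpos : 0 < l.length := List.length_pos_iff.2 (by rintro rfl; simp [C_nil] at hl)
  refine (existsUnique_congr fun j => ?_).2 (existsUnique_first_max (fun i => C (l.take i)) hpos)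
  exact ⟨fun ⟨hj, h⟩ => ⟨hj, (isWF_rotate_iff hl hj).1 h⟩,
    fun ⟨hj, h⟩ => ⟨hj, (isWF_rotate_iff hl hj).2 h⟩⟩

lemma krot_eq_rotate (k : ℕ) (l : List ℕ) : krot k l = l.rotate (l.length - k) :=
  (List.rotate_eq_drop_append_take (Nat.sub_le _ _)).symm

lemma krot_perm (k : ℕ) (l : List ℕ) : (krot k l).Perm l := by
  rw [krot_eq_rotate]; exact List.rotate_perm l _

lemma rotate_krot {k : ℕ} {l : List ℕ} (hk : k ≤ l.length) : (krot k l).rotate k = l := by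
  rw [krot_eq_rotate, List.rotate_rotate, Nat.sub_add_cancel hk, List.rotate_length]

lemma krot_rotate {j : ℕ} {l : List ℕ} (hj : j ≤ l.length) : krot j (l.rotate j) = l := by
  rw [krot_eq_rotate, List.rotate_rotate, List.length_rotate, Nat.add_sub_cancel' hj,
    List.rotate_length]

theorem eq_of_krot_eq_krot {k k' : ℕ} {w w' : List ℕ} (hw : IsWF w) (hw' : IsWF w')
    (hk : k < w.length) (hk' : k' < w'.length) (h : krot k w = krot k' w') : k = k' ∧ w = w' := by
  have hC : C (krot k w) = 1 := (C_perm (krot_perm k w)).trans hw.isForest.1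
  have hlen : (krot k w).length = w'.length := by rw [h]; exact (krot_perm k' w').length_eq
  have hrot : (krot k w).rotate k = w := rotate_krot hk.le
  have hrot' : (krot k w).rotate k' = w' := h ▸ rotate_krot hk'.le
  have hkk : k = k' := (existsUnique_isWF_rotate hC).unique
    ⟨by rw [(krot_perm k w).length_eq]; exact hk, by rwa [hrot]⟩ ⟨by omega, by rwa [hrot']⟩
  exact ⟨hkk, by rw [← hrot, ← hrot', hkk]⟩

theorem stmt_11_general (m : Multiset ℕ) (n : ℕ) (hn : Multiset.card m = n)
    (hC : (Multiset.card m : ℤ) - (m.sum : ℤ) = 1) :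
    n * {w : List ℕ | (↑w : Multiset ℕ) = m ∧ IsWF w}.ncard
      = {s : List ℕ | (↑s : Multiset ℕ) = m}.ncard := by
  have hlen : ∀ s : List ℕ, (s : Multiset ℕ) = m → s.length = n := fun s hs => by
    rw [← hn, ← hs, Multiset.coe_card]
  let f : Fin n × {w : List ℕ // (w : Multiset ℕ) = m ∧ IsWF w} →
      {s : List ℕ // (s : Multiset ℕ) = m} :=
    fun p => ⟨krot p.1 p.2.1, (Multiset.coe_eq_coe.2 (krot_perm _ _)).trans p.2.2.1⟩
  have hf : Function.Bijective f := by
    refine ⟨fun ⟨k, w, hwm, hw⟩ ⟨k', w', hwm', hw'⟩ h => ?_, fun ⟨s, hs⟩ => ?_⟩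
    · obtain ⟨hkk, rfl⟩ := eq_of_krot_eq_krot hw hw' (by rw [hlen w hwm]; exact k.2)
        (by rw [hlen w' hwm']; exact k'.2) (congrArg Subtype.val h)
      exact Prod.ext (Fin.ext hkk) rfl
    · have hs1 : C s = 1 := by rw [C_eq_card_sub_sum, hs, hC]
      obtain ⟨j, ⟨hj, hwf⟩, -⟩ := existsUnique_isWF_rotate hs1
      refine ⟨(⟨j, hlen s hs ▸ hj⟩, ⟨s.rotate j, ?_, hwf⟩), Subtype.ext (krot_rotate hj.le)⟩
      exact (Multiset.coe_eq_coe.2 (List.rotate_perm s j)).trans hs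
  have hcard := Nat.card_eq_of_bijective f hf
  rw [Nat.card_prod, Nat.card_eq_fintype_card, Fintype.card_fin] at hcard
  rw [← Nat.card_coe_set_eq, ← Nat.card_coe_set_eq]
  exact hcard

theorem stmt_11 (m : Multiset ℕ) (n : ℕ) (hn : Multiset.card m = n) (hn1 : 1 ≤ n)
    (hC : (Multiset.card m : ℤ) - (m.sum : ℤ) = 1) :
    n * {w : List ℕ | (↑w : Multiset ℕ) = m ∧ IsWF w}.ncard
      = {s : List ℕ | (↑s : Multiset ℕ) = m}.ncard :=
  stmt_11_general m n hn hC
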